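/- Let 𝓔 be a closed ideal of the algebra ℒ(X) of bounded operators on X which has the strong convex compactness property, and let ψ ∈ 𝒯ₙ. For every pair of commuting families A = (A₁,…,Aₙ) and B = (B₁,…,Bₙ) from Gen(X)ⁿ such that Aᵢ − Bᵢ ∈ 𝓔 and D(Aᵢ) = D(Bᵢ) for i = 1,…,n, the operator ψ(A) − ψ(B) belongs to 𝓔 as well. -/

import Mathlib

/-
The difference of two semigroups is given by Duhamel's formula
`T_{Aᵢ}(t) - T_{Bᵢ}(t) = ∫₀ᵗ T_{Aᵢ}(t - s) Dᵢ T_{Bᵢ}(s) ds`, a strong integral of operators of `𝓔`;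
hence it lies in `𝓔` and has norm `O(min 1 t)`. Telescoping the products, `T_A(u) - T_B(u) ∈ 𝓔`
with norm at most `K (1 - e^{-∑ uᵢ})`, a weight that is `μ`-integrable because `ψ(-1, …, -1)`
is finite. Dividing the integrand by this weight and integrating against the finite measure
`(1 - e^{-∑ uᵢ}) dμ` brings `ψ(A) - ψ(B)` under the strong convex compactness property.
-/

open MeasureTheory Complex ContinuousLinearMap

noncomputable section

/-- A generator of a uniformly bounded `C₀`-semigroup on a complex Banach space `X`,
bundled together with its semigroup `T`, its (maximal) domain `dom` and its action
`gen` (extended by `0` outside of the domain). -/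
structure GenOp (X : Type*) [NormedAddCommGroup X] [NormedSpace ℂ X] where
  T : ℝ → X →L[ℂ] X
  T_zero : T 0 = 1
  T_add : ∀ ⦃s t : ℝ⦄, 0 ≤ s → 0 ≤ t → T (s + t) = (T s).comp (T t)
  strong_cont : ∀ x : X, ContinuousOn (fun t => T t x) (Set.Ici 0)
  bounded : ∃ M : ℝ, ∀ t : ℝ, 0 ≤ t → ‖T t‖ ≤ M
  dom : Submodule ℂ X
  gen : X → X
  mem_dom_iff : ∀ x : X, x ∈ dom ↔ ∃ y : X,
    Filter.Tendsto (fun t : ℝ => (t : ℂ)⁻¹ • (T t x - x)) (nhdsWithin 0 (Set.Ioi 0)) (nhds y)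
  gen_spec : ∀ x ∈ dom,
    Filter.Tendsto (fun t : ℝ => (t : ℂ)⁻¹ • (T t x - x)) (nhdsWithin 0 (Set.Ioi 0))
      (nhds (gen x))
  gen_zero : ∀ x, x ∉ dom → gen x = 0

variable {X : Type*} [NormedAddCommGroup X] [NormedSpace ℂ X] [CompleteSpace X]

/-- Two semigroup generators commute if the corresponding semigroups commute. -/
def GenOp.Commutes (A B : GenOp X) : Prop :=
  ∀ ⦃s t : ℝ⦄, 0 ≤ s → 0 ≤ t → (A.T s).comp (B.T t) = (B.T t).comp (A.T s)

/-- The `n`-parameter semigroup `T_A(u) = T_{A₁}(u₁) ⋯ T_{Aₙ}(uₙ)` associated with a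
family `A = (A₁, …, Aₙ)` of semigroup generators. -/
def semigrProd {n : ℕ} (A : Fin n → GenOp X) (u : Fin n → ℝ) : X →L[ℂ] X :=
  (List.ofFn fun i => (A i).T (u i)).prod

/-- The representing measure of a Bernstein function `ψ ∈ 𝒯ₙ` with `c₀ = 0`, `c₁ = 0`
in its integral representation: a positive measure `μ` on `ℝ₊ⁿ \ {0}` such that
`e^{s·u} - 1` is `μ`-integrable for every `s ∈ (-∞,0)ⁿ`.  The associated Bernstein
function is `ψ(s) = ∫ (e^{s·u} - 1) dμ(u)`, see `bPsi`. -/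
structure BernsteinMeasure (n : ℕ) where
  μ : Measure (Fin n → ℝ)
  support : μ {u | ¬ ((∀ i, 0 ≤ u i) ∧ u ≠ 0)} = 0
  integrable : ∀ s : Fin n → ℝ, (∀ i, s i < 0) →
    Integrable (fun u => Real.exp (∑ i, s i * u i) - 1) μ

/-- The Bernstein function `ψ(s) = ∫ (e^{s·u} - 1) dμ(u)` of `n` variables associated
with a representing measure `μ`. -/
def bPsi {n : ℕ} (ρ : BernsteinMeasure n) (s : Fin n → ℝ) : ℝ :=
  ∫ u, (Real.exp (∑ i, s i * u i) - 1) ∂ρ.μ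

/-- A closed (in the operator norm) two-sided ideal of the algebra `ℒ(X)`. -/
structure ClosedOperatorIdeal (X : Type*) [NormedAddCommGroup X] [NormedSpace ℂ X] where
  carrier : Set (X →L[ℂ] X)
  isClosed : IsClosed carrier
  zero_mem : (0 : X →L[ℂ] X) ∈ carrier
  add_mem : ∀ ⦃S R : X →L[ℂ] X⦄, S ∈ carrier → R ∈ carrier → S + R ∈ carrier
  smul_mem : ∀ (c : ℂ) ⦃S : X →L[ℂ] X⦄, S ∈ carrier → c • S ∈ carrier
  comp_left_mem : ∀ (R : X →L[ℂ] X) ⦃S : X →L[ℂ] X⦄, S ∈ carrier → R.comp S ∈ carrier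
  comp_right_mem : ∀ (R : X →L[ℂ] X) ⦃S : X →L[ℂ] X⦄, S ∈ carrier → S.comp R ∈ carrier

/-- A set `E ⊆ ℒ(X)` has the strong convex compactness property if for every finite
measure space `(Ω, μ)` and every strongly measurable, bounded function `U : Ω → ℒ(X)`
with values in `E`, the strong integral `∫ U dμ` belongs to `E`. -/
def HasSCCP {X : Type*} [NormedAddCommGroup X] [NormedSpace ℂ X]
    (E : Set (X →L[ℂ] X)) : Prop :=
  ∀ (Ω : Type) (_ : MeasurableSpace Ω) (μ : Measure Ω), IsFiniteMeasure μ →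
    ∀ U : Ω → X →L[ℂ] X, (∀ ω, U ω ∈ E) →
      (∀ x : X, AEStronglyMeasurable (fun ω => U ω x) μ) →
      (∃ C : ℝ, ∀ ω, ‖U ω‖ ≤ C) →
      ∀ S : X →L[ℂ] X, (∀ x : X, S x = ∫ ω, U ω x ∂μ) → S ∈ E

theorem min_one_le_two_mul_one_sub_exp_neg {τ : ℝ} (hτ : 0 ≤ τ) :
    min 1 τ ≤ 2 * (1 - Real.exp (-τ)) := by
  have hexp : Real.exp (-τ) * (1 + τ) ≤ 1 := by
    rw [Real.exp_neg, inv_mul_le_one₀ (Real.exp_pos τ)]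
    linarith [Real.add_one_le_exp τ]
  rcases le_total τ 1 with h | h
  · rw [min_eq_right h]
    nlinarith [Real.exp_pos (-τ)]
  · rw [min_eq_left h]
    nlinarith [Real.exp_pos (-τ)]

section OperatorProducts

variable {𝕜 V : Type*} [NontriviallyNormedField 𝕜] [NormedAddCommGroup V] [NormedSpace 𝕜 V]

theorem norm_prod_ofFn_le {n : ℕ} {C : ℝ} (hC : 1 ≤ C) (f : Fin n → V →L[𝕜] V)
    (hf : ∀ i, ‖f i‖ ≤ C) : ‖(List.ofFn f).prod‖ ≤ C ^ n := by
  induction n with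
  | zero =>
    rw [List.ofFn_zero, List.prod_nil, pow_zero]
    exact ContinuousLinearMap.norm_id_le
  | succ n ih =>
    rw [List.ofFn_succ, List.prod_cons, pow_succ']
    exact (norm_mul_le _ _).trans <| mul_le_mul (hf 0) (ih _ fun i => hf i.succ)
      (norm_nonneg _) (zero_le_one.trans hC)

theorem norm_prod_ofFn_sub_prod_ofFn_le {n : ℕ} {C : ℝ} (hC : 1 ≤ C)
    (f g : Fin n → V →L[𝕜] V) (hf : ∀ i, ‖f i‖ ≤ C) (hg : ∀ i, ‖g i‖ ≤ C) :
    ‖(List.ofFn f).prod - (List.ofFn g).prod‖ ≤ C ^ n * ∑ i, ‖f i - g i‖ := by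
  induction n with
  | zero => simp
  | succ n ih =>
    simp only [List.ofFn_succ, List.prod_cons, Fin.sum_univ_succ]
    set P := (List.ofFn fun i => f i.succ).prod
    set Q := (List.ofFn fun i => g i.succ).prod
    have hPQ := ih (fun i => f i.succ) (fun i => g i.succ) (fun i => hf i.succ) fun i => hg i.succ
    have hQ : ‖Q‖ ≤ C ^ n := norm_prod_ofFn_le hC _ fun i => hg i.succ
    calc ‖f 0 * P - g 0 * Q‖ = ‖f 0 * (P - Q) + (f 0 - g 0) * Q‖ := by noncomm_ring
      _ ≤ C * (C ^ n * ∑ i : Fin n, ‖f i.succ - g i.succ‖) + ‖f 0 - g 0‖ * C ^ n := by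
        refine (norm_add_le _ _).trans (add_le_add ((norm_mul_le _ _).trans ?_)
          ((norm_mul_le _ _).trans (by gcongr)))
        exact mul_le_mul (hf 0) hPQ (norm_nonneg _) (zero_le_one.trans hC)
      _ ≤ C ^ (n + 1) * (‖f 0 - g 0‖ + ∑ i : Fin n, ‖f i.succ - g i.succ‖) := by
        have hCn : 0 ≤ C ^ n := by positivity
        rw [pow_succ']
        nlinarith [mul_nonneg (sub_nonneg.2 hC) (mul_nonneg (norm_nonneg (f 0 - g 0)) hCn)]

end OperatorProducts

section StrongIntegral

variable {𝕜 V W Ω : Type*} [NontriviallyNormedField 𝕜] [NormedAddCommGroup V] [NormedSpace 𝕜 V]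
  [NormedAddCommGroup W] [NormedSpace ℝ W] [NormedSpace 𝕜 W] [SMulCommClass ℝ 𝕜 W]
  [MeasurableSpace Ω] {μ : Measure Ω}

theorem ContinuousLinearMap.exists_apply_eq_integral_of_norm_le {U : Ω → V →L[𝕜] W}
    (hU : ∀ x, AEStronglyMeasurable (fun ω => U ω x) μ) {g : Ω → ℝ} (hg : Integrable g μ)
    (hUg : ∀ᵐ ω ∂μ, ‖U ω‖ ≤ g ω) : ∃ S : V →L[𝕜] W, ∀ x, S x = ∫ ω, U ω x ∂μ := by
  have hint : ∀ x, Integrable (fun ω => U ω x) μ := fun x =>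
    (hg.mul_const ‖x‖).mono' (hU x) <| hUg.mono fun ω hω => (U ω).le_of_opNorm_le hω x
  let S : V →ₗ[𝕜] W :=
    { toFun := fun x => ∫ ω, U ω x ∂μ
      map_add' := fun x y => by simp only [map_add, integral_add (hint x) (hint y)]
      map_smul' := fun c x => by simp only [map_smul, integral_smul, RingHom.id_apply] }
  refine ⟨S.mkContinuous (∫ ω, g ω ∂μ) fun x => ?_, fun x => rfl⟩
  rw [← integral_mul_const]
  exact norm_integral_le_of_norm_le (hg.mul_const ‖x‖) <| hUg.mono fun ω hω =>
    (U ω).le_of_opNorm_le hω x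

end StrongIntegral

namespace ClosedOperatorIdeal

omit [CompleteSpace X]

variable (E : ClosedOperatorIdeal X)

theorem prod_ofFn_sub_prod_ofFn_mem {n : ℕ} (f g : Fin n → X →L[ℂ] X)
    (h : ∀ i, f i - g i ∈ E.carrier) : (List.ofFn f).prod - (List.ofFn g).prod ∈ E.carrier := by
  induction n with
  | zero => simpa using E.zero_mem
  | succ n ih =>
    simp only [List.ofFn_succ, List.prod_cons]
    rw [show ∀ a b P Q : X →L[ℂ] X, a * P - b * Q = a * (P - Q) + (a - b) * Q by
      intros; noncomm_ring]
    exact E.add_mem (E.comp_left_mem _ (ih _ _ fun i => h i.succ)) (E.comp_right_mem _ (h 0))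

theorem mem_of_apply_eq_integral (hE : HasSCCP E.carrier)
    {Ω : Type} [MeasurableSpace Ω] {μ : Measure Ω} {U : Ω → X →L[ℂ] X}
    (hU : ∀ x, AEStronglyMeasurable (fun ω => U ω x) μ) (hUE : ∀ᵐ ω ∂μ, U ω ∈ E.carrier)
    {g : Ω → ℝ} (hg : Integrable g μ) (hUg : ∀ᵐ ω ∂μ, ‖U ω‖ ≤ g ω)
    {S : X →L[ℂ] X} (hS : ∀ x, S x = ∫ ω, U ω x ∂μ) : S ∈ E.carrier := by
  classical
  -- Dividing by the weight `g` and integrating against `g μ` turns `U` into a bounded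
  -- integrand over a finite measure.
  set ν := μ.withDensity fun ω => ENNReal.ofReal (g ω)
  have hν : IsFiniteMeasure ν := isFiniteMeasure_withDensity_ofReal hg.2
  have hνμ : ν ≪ μ := withDensity_absolutelyContinuous _ _
  set V : Ω → X →L[ℂ] X := fun ω =>
    if U ω ∈ E.carrier ∧ ‖U ω‖ ≤ g ω then (g ω : ℂ)⁻¹ • U ω else 0
  have hgood : ∀ᵐ ω ∂μ, U ω ∈ E.carrier ∧ ‖U ω‖ ≤ g ω := hUE.and hUg
  have hVeq : ∀ᵐ ω ∂μ, V ω = (g ω : ℂ)⁻¹ • U ω := hgood.mono fun ω hω => if_pos hω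
  refine hE Ω _ ν hν V (fun ω => ?_) (fun x => ?_) ⟨1, fun ω => ?_⟩ S fun x => ?_
  · by_cases hω : U ω ∈ E.carrier ∧ ‖U ω‖ ≤ g ω
    · simpa [V, hω] using E.smul_mem _ hω.1
    · simpa [V, hω] using E.zero_mem
  · have hmeas : AEStronglyMeasurable (fun ω => (g ω : ℂ)⁻¹ • U ω x) μ :=
      hg.aemeasurable.complex_ofReal.inv.aestronglyMeasurable.smul (hU x)
    exact (hmeas.mono_ac hνμ).congr <| hνμ.ae_le <| hVeq.mono fun ω hω =>
      (congrArg (· x) hω).symm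
  · by_cases hω : U ω ∈ E.carrier ∧ ‖U ω‖ ≤ g ω
    · simp only [V, hω, and_self, if_true, norm_smul, norm_inv, Complex.norm_real,
        Real.norm_eq_abs, abs_of_nonneg ((norm_nonneg _).trans hω.2)]
      exact inv_mul_le_one_of_le₀ hω.2 ((norm_nonneg _).trans hω.2)
    · simp [V, hω]
  · change _ = ∫ ω, V ω x ∂(μ.withDensity fun ω => ((g ω).toNNReal : ENNReal))
    rw [hS, integral_withDensity_eq_integral_smul₀ hg.aemeasurable.real_toNNReal]
    refine integral_congr_ae <| hgood.mono fun ω hω => ?_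
    have hg0 : 0 ≤ g ω := (norm_nonneg _).trans hω.2
    rcases hg0.eq_or_lt with hg0 | hg0
    · have hU0 : U ω = 0 := norm_le_zero_iff.1 (hg0 ▸ hω.2)
      simp [← hg0, hU0]
    · simp only [V, hω, and_self, if_true, NNReal.smul_def, Real.coe_toNNReal _ hg0.le,
        ← Complex.coe_smul, smul_apply, smul_smul]
      rw [mul_inv_cancel₀ (Complex.ofReal_ne_zero.2 hg0.ne'), one_smul]

end ClosedOperatorIdeal

namespace GenOp

open Filter Set Topology

variable (P Q : GenOp X)

section

omit [CompleteSpace X]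

theorem T_add_apply {s t : ℝ} (hs : 0 ≤ s) (ht : 0 ≤ t) (x : X) :
    P.T (s + t) x = P.T s (P.T t x) := by
  rw [P.T_add hs ht, comp_apply]

theorem T_comm_apply {s t : ℝ} (hs : 0 ≤ s) (ht : 0 ≤ t) (x : X) :
    P.T s (P.T t x) = P.T t (P.T s x) := by
  rw [← P.T_add_apply hs ht, ← P.T_add_apply ht hs, add_comm]

theorem tendsto_T_apply {α : Type*} {l : Filter α} {τ : α → ℝ} {z : α → X} {t₀ : ℝ} {z₀ : X}
    (ht₀ : 0 ≤ t₀) (hτ : Tendsto τ l (𝓝 t₀)) (hτ₀ : ∀ᶠ a in l, 0 ≤ τ a)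
    (hz : Tendsto z l (𝓝 z₀)) : Tendsto (fun a => P.T (τ a) (z a)) l (𝓝 (P.T t₀ z₀)) := by
  obtain ⟨M, hM⟩ := P.bounded
  have hsmall : Tendsto (fun a => P.T (τ a) (z a - z₀)) l (𝓝 0) :=
    squeeze_zero_norm' (hτ₀.mono fun a ha => (P.T (τ a)).le_of_opNorm_le (hM _ ha) _)
      (by simpa using ((hz.sub_const z₀).norm.const_mul M))
  have hstrong : Tendsto (fun a => P.T (τ a) z₀) l (𝓝 (P.T t₀ z₀)) :=
    (P.strong_cont z₀ t₀ ht₀).tendsto.comp (tendsto_nhdsWithin_iff.2 ⟨hτ, hτ₀⟩)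
  simpa using hsmall.add hstrong

theorem tendsto_smul_T_sub {y : X} (hy : y ∈ P.dom) :
    Tendsto (fun h : ℝ => h⁻¹ • (P.T h y - y)) (𝓝[>] 0) (𝓝 (P.gen y)) :=
  (P.gen_spec y hy).congr fun h => by rw [← Complex.ofReal_inv, Complex.coe_smul]

theorem T_mem_dom {y : X} (hy : y ∈ P.dom) {t : ℝ} (ht : 0 ≤ t) : P.T t y ∈ P.dom := by
  refine (P.mem_dom_iff _).2 ⟨P.T t (P.gen y), ?_⟩
  refine (((P.T t).continuous.tendsto _).comp (P.gen_spec y hy)).congr' ?_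
  filter_upwards [self_mem_nhdsWithin] with h hh
  simp only [Function.comp_apply, map_smul, map_sub, P.T_comm_apply ht (mem_Ioi.1 hh).le]

theorem continuousOn_T_sub_apply {F : X → X} (hF : Continuous F) (t : ℝ) (x : X) :
    ContinuousOn (fun s => P.T (t - s) (F (Q.T s x))) (Icc 0 t) := fun s hs =>
  P.tendsto_T_apply (sub_nonneg.2 hs.2) ((continuous_sub_left t).continuousWithinAt)
    (eventually_nhdsWithin_of_forall fun _ hv => sub_nonneg.2 hv.2)
    (hF.continuousAt.comp_continuousWithinAt
      ((Q.strong_cont x).mono Icc_subset_Ici_self s hs))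

theorem hasDerivWithinAt_T_sub_apply_T (hdom : P.dom = Q.dom) {D : X →L[ℂ] X}
    (hD : ∀ y ∈ P.dom, D y = P.gen y - Q.gen y) {x : X} (hx : x ∈ Q.dom) {s t : ℝ}
    (hs : 0 ≤ s) (hst : s < t) :
    HasDerivWithinAt (fun v => P.T (t - v) (Q.T v x)) (-P.T (t - s) (D (Q.T s x))) (Ioi s) s := by
  set y := Q.T s x
  have hyQ : y ∈ Q.dom := Q.T_mem_dom hx hs
  have hyP : y ∈ P.dom := hdom ▸ hyQ
  have hshift : Tendsto (fun v => v - s) (𝓝[>] s) (𝓝[>] 0) :=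
    tendsto_nhdsWithin_of_tendsto_nhds_of_eventually_within _
      (((continuous_sub_right s).tendsto' s 0 (sub_self s)).mono_left nhdsWithin_le_nhds)
      (eventually_nhdsWithin_of_forall fun v hv => mem_Ioi.2 (sub_pos.2 hv))
  have hnear : Ioo s t ∈ 𝓝[>] s := Ioo_mem_nhdsGT hst
  have hleft : Tendsto (fun v => t - v) (𝓝[>] s) (𝓝 (t - s)) :=
    (continuous_sub_left t).continuousAt.tendsto.mono_left nhdsWithin_le_nhds
  have hleft₀ : ∀ᶠ v in 𝓝[>] s, 0 ≤ t - v :=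
    mem_of_superset hnear fun v hv => sub_nonneg.2 hv.2.le
  have hlim := (P.tendsto_T_apply (sub_nonneg.2 hst.le) hleft hleft₀
      ((Q.tendsto_smul_T_sub hyQ).comp hshift)).sub
    (P.tendsto_T_apply (sub_nonneg.2 hst.le) hleft hleft₀ ((P.tendsto_smul_T_sub hyP).comp hshift))
  have hval : P.T (t - s) (Q.gen y) - P.T (t - s) (P.gen y) = -P.T (t - s) (D y) := by
    rw [hD y hyP, map_sub, neg_sub]
  rw [hval] at hlim
  rw [hasDerivWithinAt_iff_tendsto_slope' self_notMem_Ioi]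
  refine hlim.congr' ?_
  filter_upwards [hnear] with v hv
  -- Split `t - s = (t - v) + (v - s)` and `v = (v - s) + s` to express the slope through
  -- difference quotients of both semigroups at `y`.
  have hvs : 0 ≤ v - s := sub_nonneg.2 hv.1.le
  have hQ : Q.T v x = Q.T (v - s) y := by rw [← Q.T_add_apply hvs hs, sub_add_cancel]
  have hP : P.T (t - s) y = P.T (t - v) (P.T (v - s) y) := by
    rw [← P.T_add_apply (sub_nonneg.2 hv.2.le) hvs, sub_add_sub_cancel]
  change _ = (v - s)⁻¹ • (P.T (t - v) (Q.T v x) - P.T (t - s) y)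
  rw [hQ, hP]
  simp only [Function.comp_apply, map_smul_of_tower, map_sub, smul_sub]
  abel

theorem aestronglyMeasurable_T_sub_apply {F : X → X} (hF : Continuous F) (t : ℝ) (x : X) :
    AEStronglyMeasurable (fun s => P.T (t - s) (F (Q.T s x))) (volume.restrict (Ioc 0 t)) :=
  ((P.continuousOn_T_sub_apply Q hF t x).aestronglyMeasurable measurableSet_Icc).mono_measure
    (Measure.restrict_mono Ioc_subset_Icc_self le_rfl)

theorem norm_T_sub_comp_comp_T_le {MP MQ : ℝ} (hMP : ∀ t, 0 ≤ t → ‖P.T t‖ ≤ MP)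
    (hMQ : ∀ t, 0 ≤ t → ‖Q.T t‖ ≤ MQ) (D : X →L[ℂ] X) {s t : ℝ} (hs : s ∈ Ioc 0 t) :
    ‖(P.T (t - s)).comp (D.comp (Q.T s))‖ ≤ MP * ‖D‖ * MQ := by
  have hMP₀ : 0 ≤ MP := (norm_nonneg _).trans (hMP 0 le_rfl)
  calc ‖(P.T (t - s)).comp (D.comp (Q.T s))‖ ≤ ‖P.T (t - s)‖ * (‖D‖ * ‖Q.T s‖) :=
        (opNorm_comp_le _ _).trans (by gcongr; exact opNorm_comp_le _ _)
    _ ≤ MP * (‖D‖ * MQ) := by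
        gcongr
        exacts [hMP _ (sub_nonneg.2 hs.2), hMQ _ hs.1.le]
    _ = MP * ‖D‖ * MQ := by ring

end

theorem T_apply_sub_T_apply_eq_intervalIntegral (hdom : P.dom = Q.dom) {D : X →L[ℂ] X}
    (hD : ∀ y ∈ P.dom, D y = P.gen y - Q.gen y) {t : ℝ} (ht : 0 ≤ t) {x : X} (hx : x ∈ Q.dom) :
    P.T t x - Q.T t x = ∫ s in (0 : ℝ)..t, P.T (t - s) (D (Q.T s x)) := by
  have hFTC := intervalIntegral.integral_eq_sub_of_hasDeriv_right_of_le ht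
    (P.continuousOn_T_sub_apply Q continuous_id t x)
    (fun s hs => P.hasDerivWithinAt_T_sub_apply_T Q hdom hD hx hs.1.le hs.2)
    ((P.continuousOn_T_sub_apply Q D.continuous t x).neg.intervalIntegrable_of_Icc ht)
  simp only [intervalIntegral.integral_neg, sub_self, sub_zero, P.T_zero, Q.T_zero, id,
    one_apply_eq_self] at hFTC
  rw [← neg_sub, ← hFTC, neg_neg]

theorem T_sub_T_apply_eq_integral (hdom : P.dom = Q.dom) (hdense : Dense (P.dom : Set X))
    {D : X →L[ℂ] X} (hD : ∀ y ∈ P.dom, D y = P.gen y - Q.gen y) {t : ℝ} (ht : 0 ≤ t) (x : X) :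
    (P.T t - Q.T t) x = ∫ s in Ioc 0 t, P.T (t - s) (D (Q.T s x)) := by
  obtain ⟨MP, hMP⟩ := P.bounded
  obtain ⟨MQ, hMQ⟩ := Q.bounded
  obtain ⟨S, hS⟩ := ContinuousLinearMap.exists_apply_eq_integral_of_norm_le
    (U := fun s => (P.T (t - s)).comp (D.comp (Q.T s)))
    (fun x => P.aestronglyMeasurable_T_sub_apply Q D.continuous t x) (integrable_const _)
    (ae_restrict_of_forall_mem measurableSet_Ioc fun s hs =>
      P.norm_T_sub_comp_comp_T_le Q hMP hMQ D hs)
  have hPQS : ⇑(P.T t - Q.T t) = S :=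
    (P.T t - Q.T t).continuous.ext_on hdense S.continuous fun y hy => by
      rw [hS, sub_apply, P.T_apply_sub_T_apply_eq_intervalIntegral Q hdom hD ht (hdom ▸ hy),
        intervalIntegral.integral_of_le ht]
      rfl
  rw [hPQS, hS]
  rfl

theorem norm_T_sub_T_le {MP MQ : ℝ} (hMP : ∀ t, 0 ≤ t → ‖P.T t‖ ≤ MP)
    (hMQ : ∀ t, 0 ≤ t → ‖Q.T t‖ ≤ MQ) (hdom : P.dom = Q.dom) (hdense : Dense (P.dom : Set X))
    {D : X →L[ℂ] X} (hD : ∀ y ∈ P.dom, D y = P.gen y - Q.gen y) {t : ℝ} (ht : 0 ≤ t) :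
    ‖P.T t - Q.T t‖ ≤ MP * ‖D‖ * MQ * t := by
  have hMP₀ : 0 ≤ MP := (norm_nonneg _).trans (hMP 0 le_rfl)
  have hMQ₀ : 0 ≤ MQ := (norm_nonneg _).trans (hMQ 0 le_rfl)
  refine opNorm_le_bound _ (by positivity) fun x => ?_
  rw [P.T_sub_T_apply_eq_integral Q hdom hdense hD ht]
  calc ‖∫ s in Ioc 0 t, P.T (t - s) (D (Q.T s x))‖
      ≤ MP * ‖D‖ * MQ * ‖x‖ * volume.real (Ioc 0 t) :=
        norm_setIntegral_le_of_norm_le_const measure_Ioc_lt_top fun s hs =>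
          ((P.T (t - s)).comp (D.comp (Q.T s))).le_of_opNorm_le
            (P.norm_T_sub_comp_comp_T_le Q hMP hMQ D hs) x
    _ = MP * ‖D‖ * MQ * t * ‖x‖ := by rw [Real.volume_real_Ioc_of_le ht, sub_zero]; ring

theorem T_sub_T_mem (E : ClosedOperatorIdeal X) (hE : HasSCCP E.carrier)
    (hdom : P.dom = Q.dom) (hdense : Dense (P.dom : Set X)) {D : X →L[ℂ] X}
    (hD : ∀ y ∈ P.dom, D y = P.gen y - Q.gen y) (hDE : D ∈ E.carrier) {t : ℝ} (ht : 0 ≤ t) :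
    P.T t - Q.T t ∈ E.carrier := by
  obtain ⟨MP, hMP⟩ := P.bounded
  obtain ⟨MQ, hMQ⟩ := Q.bounded
  exact E.mem_of_apply_eq_integral hE (U := fun s => (P.T (t - s)).comp (D.comp (Q.T s)))
    (fun x => P.aestronglyMeasurable_T_sub_apply Q D.continuous t x)
    (ae_of_all _ fun s => E.comp_left_mem _ (E.comp_right_mem _ hDE)) (integrable_const _)
    (ae_restrict_of_forall_mem measurableSet_Ioc fun s hs =>
      P.norm_T_sub_comp_comp_T_le Q hMP hMQ D hs)
    (P.T_sub_T_apply_eq_integral Q hdom hdense hD ht)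

theorem norm_T_sub_T_le_one_sub_exp {MP MQ : ℝ}
    (hMP : ∀ t, 0 ≤ t → ‖P.T t‖ ≤ MP) (hMQ : ∀ t, 0 ≤ t → ‖Q.T t‖ ≤ MQ)
    (hdom : P.dom = Q.dom) (hdense : Dense (P.dom : Set X)) {D : X →L[ℂ] X}
    (hD : ∀ y ∈ P.dom, D y = P.gen y - Q.gen y) {t : ℝ} (ht : 0 ≤ t) :
    ‖P.T t - Q.T t‖ ≤ 2 * (MP + MQ + MP * ‖D‖ * MQ) * (1 - Real.exp (-t)) := by
  have hMP₀ : 0 ≤ MP := (norm_nonneg _).trans (hMP 0 le_rfl)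
  have hMQ₀ : 0 ≤ MQ := (norm_nonneg _).trans (hMQ 0 le_rfl)
  have hmin : ‖P.T t - Q.T t‖ ≤ (MP + MQ + MP * ‖D‖ * MQ) * min 1 t := by
    rcases le_total t 1 with h | h
    · rw [min_eq_right h]
      have := P.norm_T_sub_T_le Q hMP hMQ hdom hdense hD ht
      nlinarith [mul_nonneg (add_nonneg hMP₀ hMQ₀) ht]
    · rw [min_eq_left h, mul_one]
      have := (norm_sub_le (P.T t) (Q.T t)).trans (add_le_add (hMP t ht) (hMQ t ht))
      nlinarith [mul_nonneg (mul_nonneg hMP₀ (norm_nonneg D)) hMQ₀]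
  calc ‖P.T t - Q.T t‖ ≤ (MP + MQ + MP * ‖D‖ * MQ) * min 1 t := hmin
    _ ≤ (MP + MQ + MP * ‖D‖ * MQ) * (2 * (1 - Real.exp (-t))) := by
      gcongr
      exact min_one_le_two_mul_one_sub_exp_neg ht
    _ = _ := by ring

end GenOp

section SemigroupProduct

open Set Topology

variable {n : ℕ}

omit [CompleteSpace X] in
theorem continuousOn_semigrProd_apply (A : Fin n → GenOp X) (x : X) :
    ContinuousOn (fun u => semigrProd A u x) (Ici 0) := by
  induction n with
  | zero =>
    simp only [semigrProd, List.ofFn_zero, List.prod_nil, one_apply_eq_self]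
    exact continuousOn_const
  | succ n ih =>
    intro u (hu : 0 ≤ u)
    have htail : ContinuousWithinAt (fun v : Fin (n + 1) → ℝ =>
        semigrProd (fun i => A i.succ) (Fin.tail v) x) (Ici 0) u :=
      ContinuousWithinAt.comp (ih (fun i => A i.succ) (Fin.tail u) fun i => hu i.succ)
        (continuous_pi fun i => continuous_apply i.succ).continuousWithinAt
        fun v (hv : 0 ≤ v) i => hv i.succ
    have hhead := (A 0).tendsto_T_apply (l := 𝓝[Ici 0] u) (hu 0)
      (continuous_apply 0).continuousWithinAt.tendsto
      (eventually_nhdsWithin_of_forall fun (v : Fin (n + 1) → ℝ) (hv : 0 ≤ v) => hv 0) htail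
    simpa only [ContinuousWithinAt, semigrProd, List.ofFn_succ, List.prod_cons, mul_apply_eq_comp,
      Fin.tail] using hhead

theorem norm_semigrProd_sub_le {A B : Fin n → GenOp X} {C : ℝ} (hC : 1 ≤ C)
    (hA : ∀ i t, 0 ≤ t → ‖(A i).T t‖ ≤ C) (hB : ∀ i t, 0 ≤ t → ‖(B i).T t‖ ≤ C)
    (hdom : ∀ i, (A i).dom = (B i).dom) (hdense : ∀ i, Dense ((A i).dom : Set X))
    {D : Fin n → X →L[ℂ] X} (hD : ∀ i, ∀ y ∈ (A i).dom, D i y = (A i).gen y - (B i).gen y)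
    {u : Fin n → ℝ} (hu : 0 ≤ u) :
    ‖semigrProd A u - semigrProd B u‖
      ≤ C ^ n * (∑ i, 2 * (C + C + C * ‖D i‖ * C)) * (1 - Real.exp (-∑ i, u i)) := by
  have hC₀ : 0 ≤ C := zero_le_one.trans hC
  calc ‖semigrProd A u - semigrProd B u‖
      ≤ C ^ n * ∑ i, ‖(A i).T (u i) - (B i).T (u i)‖ :=
        norm_prod_ofFn_sub_prod_ofFn_le hC _ _ (fun i => hA i _ (hu i)) fun i => hB i _ (hu i)
    _ ≤ C ^ n * ∑ i, 2 * (C + C + C * ‖D i‖ * C) * (1 - Real.exp (-u i)) := by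
        gcongr with i
        exact (A i).norm_T_sub_T_le_one_sub_exp (B i) (hA i) (hB i) (hdom i) (hdense i) (hD i)
          (hu i)
    _ ≤ C ^ n * ∑ i, 2 * (C + C + C * ‖D i‖ * C) * (1 - Real.exp (-∑ j, u j)) := by
        gcongr with i
        exact Finset.single_le_sum (fun j _ => hu j) (Finset.mem_univ i)
    _ = _ := by rw [← Finset.sum_mul, mul_assoc]

end SemigroupProduct

namespace BernsteinMeasure

variable {n : ℕ} (ρ : BernsteinMeasure n)

theorem ae_nonneg : ∀ᵐ u ∂ρ.μ, 0 ≤ u :=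
  measure_mono_null (fun u hu => by simp_all [Pi.le_def]) ρ.support

theorem integrable_one_sub_exp_neg_sum :
    Integrable (fun u => 1 - Real.exp (-∑ i, u i)) ρ.μ := by
  refine (ρ.integrable (fun _ => -1) fun _ => neg_one_lt_zero).neg.congr (ae_of_all _ fun u => ?_)
  simp [Finset.sum_neg_distrib]

theorem aestronglyMeasurable_of_continuousOn {F : Type*} [TopologicalSpace F]
    [TopologicalSpace.PseudoMetrizableSpace F] {f : (Fin n → ℝ) → F}
    (hf : ContinuousOn f (Set.Ici 0)) : AEStronglyMeasurable f ρ.μ := by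
  have h := hf.aestronglyMeasurable (μ := ρ.μ) measurableSet_Ici
  rwa [Measure.restrict_eq_self_of_ae_mem (s := Set.Ici 0) ρ.ae_nonneg] at h

end BernsteinMeasure

theorem bernstein_perturbation_ideal_SCCP_general {n : ℕ} (ρ : BernsteinMeasure n)
    (E : ClosedOperatorIdeal X) (hE : HasSCCP E.carrier)
    (A B : Fin n → GenOp X)
    (MA MB : ℝ)
    (hMA : ∀ i, ∀ t : ℝ, 0 ≤ t → ‖(A i).T t‖ ≤ MA)
    (hMB : ∀ i, ∀ t : ℝ, 0 ≤ t → ‖(B i).T t‖ ≤ MB)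
    (hdom : ∀ i, (A i).dom = (B i).dom)
    (hdense : ∀ i, Dense ((A i).dom : Set X))
    (D : Fin n → (X →L[ℂ] X))
    (hD : ∀ i, ∀ x ∈ (A i).dom, D i x = (A i).gen x - (B i).gen x)
    (hDE : ∀ i, D i ∈ E.carrier) :
    ∃ S : X →L[ℂ] X,
      (∀ x ∈ ⨅ i, (A i).dom, S x = ∫ u, (semigrProd A u x - semigrProd B u x) ∂ρ.μ) ∧
      S ∈ E.carrier := by
  set C := max (max MA MB) 1
  have hA : ∀ i t, 0 ≤ t → ‖(A i).T t‖ ≤ C := fun i t ht =>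
    (hMA i t ht).trans ((le_max_left _ _).trans (le_max_left _ _))
  have hB : ∀ i t, 0 ≤ t → ‖(B i).T t‖ ≤ C := fun i t ht =>
    (hMB i t ht).trans ((le_max_right _ _).trans (le_max_left _ _))
  have hmeas : ∀ x, AEStronglyMeasurable (fun u => (semigrProd A u - semigrProd B u) x) ρ.μ :=
    fun x => ρ.aestronglyMeasurable_of_continuousOn
      ((continuousOn_semigrProd_apply A x).sub (continuousOn_semigrProd_apply B x))
  have hmem : ∀ᵐ u ∂ρ.μ, semigrProd A u - semigrProd B u ∈ E.carrier :=
    ρ.ae_nonneg.mono fun u hu => E.prod_ofFn_sub_prod_ofFn_mem _ _ fun i =>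
      (A i).T_sub_T_mem (B i) E hE (hdom i) (hdense i) (hD i) (hDE i) (hu i)
  have hbound := ρ.ae_nonneg.mono fun u hu =>
    norm_semigrProd_sub_le (le_max_right _ _) hA hB hdom hdense hD hu
  have hg := ρ.integrable_one_sub_exp_neg_sum.const_mul
    (C ^ n * ∑ i, 2 * (C + C + C * ‖D i‖ * C))
  obtain ⟨S, hS⟩ := ContinuousLinearMap.exists_apply_eq_integral_of_norm_le hmeas hg hbound
  exact ⟨S, fun x _ => hS x, E.mem_of_apply_eq_integral hE hmeas hmem hg hbound hS⟩

/-- **Theorem 3.** Let `𝓔` be a closed ideal of `ℒ(X)` with the strong convex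
compactness property and `ψ ∈ 𝒯ₙ`.  For commuting families `A`, `B` from `Gen(X)ⁿ`
with `Aᵢ - Bᵢ ∈ 𝓔` and `D(Aᵢ) = D(Bᵢ)`, the (bounded) operator `ψ(A) - ψ(B)`
belongs to `𝓔` as well. -/
theorem bernstein_perturbation_ideal_SCCP {n : ℕ} (hn : 0 < n) (ρ : BernsteinMeasure n)
    (E : ClosedOperatorIdeal X) (hE : HasSCCP E.carrier)
    (A B : Fin n → GenOp X)
    (hAcomm : ∀ i j, (A i).Commutes (A j)) (hBcomm : ∀ i j, (B i).Commutes (B j))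
    (MA MB : ℝ)
    (hMA : ∀ i, ∀ t : ℝ, 0 ≤ t → ‖(A i).T t‖ ≤ MA)
    (hMB : ∀ i, ∀ t : ℝ, 0 ≤ t → ‖(B i).T t‖ ≤ MB)
    (hdom : ∀ i, (A i).dom = (B i).dom)
    (hdense : ∀ i, Dense ((A i).dom : Set X))
    (D : Fin n → (X →L[ℂ] X))
    (hD : ∀ i, ∀ x ∈ (A i).dom, D i x = (A i).gen x - (B i).gen x)
    (hDE : ∀ i, D i ∈ E.carrier) :
    ∃ S : X →L[ℂ] X,
      (∀ x ∈ ⨅ i, (A i).dom, S x = ∫ u, (semigrProd A u x - semigrProd B u x) ∂ρ.μ) ∧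
      S ∈ E.carrier :=
  bernstein_perturbation_ideal_SCCP_general ρ E hE A B MA MB hMA hMB hdom hdense D hD hDE
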